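/- For every real s ≥ 0 and all real α > 0, β > 0, if the series ∑_{n=0}^∞ f(s;n,α,β)^2 / f(s;n+1,α,β) converges, then the negative expectation of the second derivative of the log marginal model equals the expectation of the squared score: −∑_{k=0}^∞ p(k|s) · ( f^{(2)}(s;k,α,β)/f(s;k,α,β) − (f^{(1)}(s;k,α,β)/f(s;k,α,β))^2 ) = (β/(1+β))^α · e^{−s} · ∑_{n=0}^∞ f(s;n,α,β)^2 / f(s;n+1,α,β) − 1, where f^{(m)}(s;k,α,β) equals 0 for k < m and f(s;k−m,α,β) for k ≥ m. -/

import Mathlib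

/-- The polynomial `f(s;k,α,β)`. -/
noncomputable def f (s : ℝ) (k : ℕ) (α β : ℝ) : ℝ :=
  ∑ n ∈ Finset.range (k + 1),
    (Real.Gamma (α + n) / Real.Gamma α) * s ^ (k - n) /
      ((n.factorial : ℝ) * ((k - n).factorial : ℝ) * (1 + β) ^ n)

/-- The marginal model `p(k|s) = (β/(1+β))^α · e^{−s} · f(s;k,α,β)`. -/
noncomputable def p (s : ℝ) (k : ℕ) (α β : ℝ) : ℝ :=
  (β / (1 + β)) ^ α * Real.exp (-s) * f s k α β

/-!
Writing `x = (1 + β)⁻¹`, the polynomial `f(s;·)` is the Cauchy product of the negative binomial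
coefficients `Γ(α+n)/(Γ(α) n!) xⁿ`, which sum to `(1 - x)^(-α)`, and the exponential coefficients
`sᵐ/m!`. Hence `∑ₖ f(s;k) = (β/(1+β))^(-α) eˢ`, i.e. `p(·|s)` is a probability distribution.
Since `f > 0`, the `k`-th summand splits as `p(k-2|s) - C f(s;k-1)²/f(s;k)` with
`C = (β/(1+β))^α e^(-s)`, and after shifting indices the two parts sum to `1` and
`C ∑ₙ f(s;n)²/f(s;n+1)`.
-/

open Finset Polynomial

theorem Real.Gamma_add_nat_div_Gamma_eq {α : ℝ} (hα : ∀ k : ℕ, α ≠ -k) (n : ℕ) :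
    Real.Gamma (α + n) / Real.Gamma α = (ascPochhammer ℝ n).eval α := by
  induction n with
  | zero => simp [Real.Gamma_ne_zero hα]
  | succ n ih =>
    have hαn : α + n ≠ 0 := fun h => hα n (eq_neg_of_add_eq_zero_left h)
    rw [ascPochhammer_succ_eval, ← ih, Nat.cast_succ, ← add_assoc, Real.Gamma_add_one hαn]
    ring

theorem Ring.choose_add_sub_one_eq_ascPochhammer_div {K : Type*} [Field K] [CharZero K]
    (a : K) (n : ℕ) :
    Ring.choose (a + n - 1) n = (ascPochhammer K n).eval a / n.factorial := by
  rw [Ring.choose_eq_smul, descPochhammer_smeval_eq_ascPochhammer, ascPochhammer_smeval_eq_eval,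
    smul_eq_mul, show a + n - 1 - n + 1 = a by ring, inv_mul_eq_div]

theorem hasSum_ascPochhammer_div_factorial_mul_pow (a : ℝ) {x : ℝ} (hx : |x| < 1) :
    HasSum (fun n : ℕ => (ascPochhammer ℝ n).eval a / n.factorial * x ^ n) ((1 - x) ^ (-a)) := by
  have h := (Real.one_div_one_sub_rpow_hasFPowerSeriesOnBall_zero a).hasSum
    (y := x) (by simpa [Real.enorm_eq_ofReal_abs] using hx)
  simp only [FormalMultilinearSeries.ofScalars_apply_eq,
    Ring.choose_add_sub_one_eq_ascPochhammer_div, smul_eq_mul, zero_add] at h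
  rw [Real.rpow_neg (by linarith [le_abs_self x]), ← one_div]
  exact h

theorem hasSum_ite_lt_sub_iff {G : Type*} [AddCommGroup G] [TopologicalSpace G]
    [IsTopologicalAddGroup G] {g : ℕ → G} {a : G} (m : ℕ) :
    HasSum (fun k => if k < m then 0 else g (k - m)) a ↔ HasSum g a := by
  rw [← hasSum_nat_add_iff' m, sum_eq_zero fun i hi => if_pos (mem_range.mp hi)]
  simp

theorem f_eq_sum_range_mul (s : ℝ) (k : ℕ) {α : ℝ} (hα : 0 < α) (β : ℝ) :
    f s k α β = ∑ n ∈ range (k + 1),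
      (ascPochhammer ℝ n).eval α / n.factorial * (1 + β)⁻¹ ^ n *
        (s ^ (k - n) / (k - n).factorial) := by
  refine sum_congr rfl fun n _ => ?_
  have hα' : ∀ k : ℕ, α ≠ -k := fun k => ((neg_nonpos.2 k.cast_nonneg).trans_lt hα).ne'
  rw [Real.Gamma_add_nat_div_Gamma_eq hα', inv_pow]
  field_simp

theorem f_pos {s : ℝ} (hs : 0 ≤ s) {α β : ℝ} (hα : 0 < α) (hβ : 0 < 1 + β) (k : ℕ) :
    0 < f s k α β := by
  have hpoch : ∀ n, 0 < (ascPochhammer ℝ n).eval α := fun n => ascPochhammer_pos n α hα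
  rw [f_eq_sum_range_mul s k hα β]
  refine sum_pos' (fun n _ => ?_) ⟨k, self_mem_range_succ k, ?_⟩
  · have := hpoch n
    positivity
  · have := hpoch k
    simp only [Nat.sub_self, pow_zero, Nat.factorial_zero]
    positivity

theorem hasSum_f (s : ℝ) {α β : ℝ} (hα : 0 < α) (hβ : 0 < β) :
    HasSum (fun k => f s k α β) ((β / (1 + β)) ^ (-α) * Real.exp s) := by
  have hx : 0 < (1 + β)⁻¹ := by positivity
  have hx1 : |(1 + β)⁻¹| < 1 := by
    rw [abs_of_pos hx]
    exact inv_lt_one_of_one_lt₀ (by linarith)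
  have hA := hasSum_ascPochhammer_div_factorial_mul_pow α hx1
  have hB : HasSum (fun n : ℕ => s ^ n / n.factorial) (Real.exp s) := by
    simpa [Real.exp_eq_exp_ℝ] using NormedSpace.expSeries_div_hasSum_exp s
  have hAn : Summable fun n => ‖(ascPochhammer ℝ n).eval α / n.factorial * (1 + β)⁻¹ ^ n‖ := by
    simpa only [Real.norm_eq_abs] using hA.summable.abs
  have hBn : Summable fun n : ℕ => ‖s ^ n / n.factorial‖ := by
    simpa [norm_div, norm_pow] using Real.summable_pow_div_factorial |s|
  have h1x : 1 - (1 + β)⁻¹ = β / (1 + β) := by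
    field_simp
    ring
  have h := hasSum_sum_range_mul_of_summable_norm hAn hBn
  rw [hA.tsum_eq, hB.tsum_eq, h1x] at h
  rwa [show (fun k => f s k α β) = _ from funext fun k => f_eq_sum_range_mul s k hα β]

theorem hasSum_p (s : ℝ) {α β : ℝ} (hα : 0 < α) (hβ : 0 < β) :
    HasSum (fun k => p s k α β) 1 := by
  have hq : 0 < β / (1 + β) := by positivity
  have hnorm : (β / (1 + β)) ^ α * Real.exp (-s) * ((β / (1 + β)) ^ (-α) * Real.exp s) = 1 := by
    rw [Real.rpow_neg hq.le, Real.exp_neg, mul_mul_mul_comm,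
      mul_inv_cancel₀ (Real.rpow_pos_of_pos hq α).ne', inv_mul_cancel₀ (Real.exp_pos s).ne',
      mul_one]
  have h := (hasSum_f s hα hβ).mul_left ((β / (1 + β)) ^ α * Real.exp (-s))
  rwa [hnorm] at h

theorem statement9 (s : ℝ) (hs : 0 ≤ s) (α β : ℝ) (hα : 0 < α) (hβ : 0 < β)
    (hsum : Summable fun n : ℕ => f s n α β ^ 2 / f s (n + 1) α β) :
    -∑' k : ℕ, p s k α β *
        ((if k < 2 then 0 else f s (k - 2) α β) / f s k α β -
          ((if k < 1 then 0 else f s (k - 1) α β) / f s k α β) ^ 2) =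
      (β / (1 + β)) ^ α * Real.exp (-s) *
        (∑' n : ℕ, f s n α β ^ 2 / f s (n + 1) α β) - 1 := by
  set C := (β / (1 + β)) ^ α * Real.exp (-s)
  have hf : ∀ k, f s k α β ≠ 0 := fun k => (f_pos hs hα (by linarith) k).ne'
  have h2 : HasSum (fun k => if k < 2 then 0 else p s (k - 2) α β) 1 :=
    (hasSum_ite_lt_sub_iff (g := fun n => p s n α β) 2).mpr (hasSum_p s hα hβ)
  have h1 : HasSum (fun k => (if k < 1 then 0 else f s (k - 1) α β) ^ 2 / f s k α β)
      (∑' n : ℕ, f s n α β ^ 2 / f s (n + 1) α β) := by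
    have h := (hasSum_ite_lt_sub_iff (g := fun n => f s n α β ^ 2 / f s (n + 1) α β) 1).mpr
      hsum.hasSum
    rwa [show (fun k => if k < 1 then 0 else f s (k - 1) α β ^ 2 / f s (k - 1 + 1) α β) =
        fun k => (if k < 1 then 0 else f s (k - 1) α β) ^ 2 / f s k α β from
      funext fun k => by cases k <;> simp] at h
  have hterm : ∀ k, p s k α β *
      ((if k < 2 then 0 else f s (k - 2) α β) / f s k α β -
        ((if k < 1 then 0 else f s (k - 1) α β) / f s k α β) ^ 2) =
      (if k < 2 then 0 else p s (k - 2) α β) -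
        C * ((if k < 1 then 0 else f s (k - 1) α β) ^ 2 / f s k α β) := by
    intro k
    have hsplit : ∀ a b : ℝ, C * f s k α β * (a / f s k α β - (b / f s k α β) ^ 2) =
        C * a - C * (b ^ 2 / f s k α β) := by
      intro a b
      field_simp [hf k]
    rw [show p s k α β = C * f s k α β from rfl, hsplit, mul_ite, mul_zero]
    rfl
  rw [tsum_congr hterm, (h2.sub (h1.mul_left C)).tsum_eq]
  ring
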